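/- Let R be a ring with proper involution and let m be a positive integer. An element a ∈ R has an m-weak group inverse if and only if a has a Drazin inverse d and there exist x ∈ R and n ∈ ℕ such that x R = d R (i.e. x = d u and d = x v for some u, v ∈ R), ((a^m)^* a^(m+1) x)^* = (a^m)^* a^(m+1) x, and a^n = a x a^n. In this case, such an x is an m-weak group inverse of a. -/

import Mathlib

/-!
Given an `m`-weak group inverse `z` of `a` with index `k`, the element `d = z^(k+2) a^(k+1)` is a
Drazin inverse of `a` generating the same right ideal as `z`, and `a z a^k = a^k`. For the
Hermitian condition put `e = a z` and `P = (a^m)* a^m`: since `a^m e = a^k w` for some `w`, the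
defining equation of `z` gives `e* P e = e* P`, and then `P e = e* P = (e* P e)*` is Hermitian.

Conversely, `x ∈ d R` together with `a^n = a x a^n` force `a d x = x` and `x a d = d`, which give
`a x² = x` and `x a^(K+1) = a^K` for `K` past the Drazin index. The defining equation of an
`m`-weak group inverse at index `m + N`, with `N ≥ n`, is then the Hermitian condition multiplied
by `a^N` on the right.
-/

/-- `z` is an `m`-weak group inverse of `a`. -/
def IsMWGI {R : Type*} [Ring R] [StarRing R] (m : ℕ) (a z : R) : Prop :=
  a * z ^ 2 = z ∧ ∃ k : ℕ, z * a ^ (k + 1) = a ^ k ∧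
    star (a ^ k) * a ^ (m + 1) * z = star (a ^ k) * a ^ m

/-- `w` is a weak group inverse of `b`. -/
def IsWGI {R : Type*} [Ring R] [StarRing R] (b w : R) : Prop :=
  b * w ^ 2 = w ∧ star (star b * b ^ 2 * w) = star b * b ^ 2 * w ∧
    ∃ k : ℕ, b ^ k = w * b ^ (k + 1)

/-- `x` is a group inverse of `u`. -/
def IsGroupInv {R : Type*} [Ring R] (u x : R) : Prop :=
  u * x ^ 2 = x ∧ u * x = x * u ∧ u = u ^ 2 * x

/-- `d` is a Drazin inverse of `a`. -/
def IsDrazin {R : Type*} [Ring R] (a d : R) : Prop :=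
  a * d ^ 2 = d ∧ a * d = d * a ∧ ∃ k : ℕ, a ^ k = d * a ^ (k + 1)

/-- `y` is a core-EP inverse of `a`. -/
def IsCoreEP {R : Type*} [Ring R] [StarRing R] (a y : R) : Prop :=
  a * y ^ 2 = y ∧ star (a * y) = a * y ∧ ∃ k : ℕ, a ^ k = y * a ^ (k + 1)

section Monoid

variable {M : Type*} [Monoid M] {a z : M}

theorem mul_pow_succ_succ_of_mul_sq (h : a * z ^ 2 = z) (j : ℕ) :
    a * z ^ (j + 2) = z ^ (j + 1) := by
  rw [add_comm, pow_add, ← mul_assoc, h, ← pow_succ']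

theorem pow_mul_pow_succ_of_mul_sq (h : a * z ^ 2 = z) : ∀ j : ℕ, a ^ j * z ^ (j + 1) = z
  | 0 => by simp
  | j + 1 => by
    rw [pow_succ, mul_assoc, mul_pow_succ_succ_of_mul_sq h, pow_mul_pow_succ_of_mul_sq h j]

theorem pow_succ_mul_pow_succ_of_mul_sq (h : a * z ^ 2 = z) (j : ℕ) :
    a ^ (j + 1) * z ^ (j + 1) = a * z := by
  rw [pow_succ', mul_assoc, pow_mul_pow_succ_of_mul_sq h]

theorem mul_pow_succ_of_le {k l : ℕ} (h : z * a ^ (k + 1) = a ^ k) (hkl : k ≤ l) :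
    z * a ^ (l + 1) = a ^ l := by
  obtain ⟨i, rfl⟩ := Nat.exists_eq_add_of_le hkl
  rw [add_right_comm, pow_add, ← mul_assoc, h, ← pow_add]

theorem pow_mul_pow_add {k : ℕ} (h : z * a ^ (k + 1) = a ^ k) :
    ∀ i : ℕ, z ^ i * a ^ (k + i) = a ^ k
  | 0 => by simp
  | i + 1 => by
    rw [pow_succ, mul_assoc, ← add_assoc, mul_pow_succ_of_le h (Nat.le_add_right k i),
      pow_mul_pow_add h i]

theorem mul_pow_of_le {e : M} {n N : ℕ} (h : e * a ^ n = a ^ n) (hnN : n ≤ N) :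
    e * a ^ N = a ^ N := by
  obtain ⟨i, rfl⟩ := Nat.exists_eq_add_of_le hnN
  rw [pow_add, ← mul_assoc, h]

theorem eq_pow_mul_pow_mul_pow_mul_pow {k : ℕ} (hz : a * z ^ 2 = z)
    (h : z * a ^ (k + 1) = a ^ k) :
    z = z ^ (k + 2) * a ^ (k + 1) * (a ^ (k + 2) * z ^ (k + 2)) := by
  rw [mul_assoc, ← mul_assoc (a ^ (k + 1)), ← pow_add, ← mul_assoc,
    pow_mul_pow_add (mul_pow_succ_of_le h (Nat.le_succ k)), pow_mul_pow_succ_of_mul_sq hz]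

theorem mul_mul_pow_of_mul_sq {k : ℕ} (hz : a * z ^ 2 = z) (h : z * a ^ (k + 1) = a ^ k) :
    a * z * a ^ k = a ^ k := by
  rw [← h, ← mul_assoc, mul_assoc a, ← sq, hz, h]

end Monoid

section StarMonoid

variable {M : Type*} [Monoid M] [StarMul M]

theorem star_mul_eq_of_star_mul_mul {P e : M} (hP : star P = P)
    (h : star e * P * e = star e * P) : star (P * e) = P * e :=
  calc star (P * e) = star e * P := by rw [star_mul, hP]
    _ = star e * P * e := h.symm
    _ = star (star e * P * e) := by rw [star_mul, star_mul, star_star, hP, mul_assoc]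
    _ = P * e := by rw [h, star_mul, star_star, hP]

theorem isSelfAdjoint_star_pow_mul_pow_succ_mul {a z : M} {m k : ℕ} (hz : a * z ^ 2 = z)
    (h : star (a ^ k) * a ^ (m + 1) * z = star (a ^ k) * a ^ m) :
    IsSelfAdjoint (star (a ^ m) * a ^ (m + 1) * z) := by
  have hrange : a ^ (m + 1) * z = a ^ k * (a ^ (m + 1) * z ^ (k + 1)) := by
    rw [← mul_assoc, pow_mul_comm, mul_assoc, pow_mul_pow_succ_of_mul_sq hz]
  have hsplit : star (a ^ m) * a ^ (m + 1) * z = star (a ^ m) * a ^ m * (a * z) := by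
    simp only [pow_succ, mul_assoc]
  rw [IsSelfAdjoint, hsplit]
  refine star_mul_eq_of_star_mul_mul (by rw [star_mul, star_star]) ?_
  calc star (a * z) * (star (a ^ m) * a ^ m) * (a * z)
        = star (a ^ (m + 1) * z) * (a ^ (m + 1) * z) := by simp only [star_mul, pow_succ, mul_assoc]
    _ = star (a ^ (m + 1) * z ^ (k + 1)) * (star (a ^ k) * a ^ (m + 1) * z) := by
        nth_rewrite 1 [hrange]; simp only [star_mul, mul_assoc]
    _ = star (a ^ (m + 1) * z) * a ^ m := by rw [h, hrange]; simp only [star_mul, mul_assoc]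
    _ = star (a * z) * (star (a ^ m) * a ^ m) := by simp only [star_mul, pow_succ, mul_assoc]

end StarMonoid

section Ring

variable {R : Type*} [Ring R]

theorem isDrazin_pow_mul_pow {a z : R} {k : ℕ} (hz : a * z ^ 2 = z)
    (h : z * a ^ (k + 1) = a ^ k) : IsDrazin a (z ^ (k + 2) * a ^ (k + 1)) := by
  have h' : z * a ^ (k + 2) = a ^ (k + 1) := mul_pow_succ_of_le h (Nat.le_succ k)
  have had : a * (z ^ (k + 2) * a ^ (k + 1)) = z ^ (k + 1) * a ^ (k + 1) := by
    rw [← mul_assoc, mul_pow_succ_succ_of_mul_sq hz]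
  refine ⟨?_, ?_, k + 1, ?_⟩
  · rw [sq, ← mul_assoc, had, mul_assoc, ← mul_assoc (a ^ (k + 1)),
      pow_mul_pow_succ_of_mul_sq hz (k + 1), ← mul_assoc, ← pow_succ]
  · rw [had, mul_assoc, ← pow_succ, pow_succ z (k + 1), mul_assoc, h']
  · rw [mul_assoc, ← pow_add, pow_mul_pow_add h' (k + 2)]

theorem isMWGI_of_isDrazin [StarRing R] {m n : ℕ} {a d x : R} (hd : IsDrazin a d)
    (hx : ∃ u, x = d * u)
    (hsym : star (star (a ^ m) * a ^ (m + 1) * x) = star (a ^ m) * a ^ (m + 1) * x)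
    (hn : a ^ n = a * x * a ^ n) : IsMWGI m a x := by
  obtain ⟨hdd, hcomm, j, hj⟩ := hd
  obtain ⟨u, hu⟩ := hx
  have hadx : a * d * x = x := by rw [hu, mul_assoc a, ← mul_assoc d, ← sq, ← mul_assoc, hdd]
  have hdax : d * (a * x) = x := by rw [← mul_assoc, ← hcomm, hadx]
  have haxad : a * x * (a * d) = a * d := by
    rw [← pow_succ_mul_pow_succ_of_mul_sq hdd n, ← mul_assoc,
      mul_pow_of_le hn.symm (Nat.le_succ n)]
  have hxad : x * (a * d) = d :=
    calc x * (a * d) = d * (a * x * (a * d)) := by rw [← mul_assoc d, hdax]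
      _ = d := by rw [haxad, ← mul_assoc, ← hcomm, mul_assoc, ← sq, hdd]
  refine ⟨?_, m + (n + j), ?_, ?_⟩
  · calc a * x ^ 2 = a * x * (a * d) * x := by rw [mul_assoc _ (a * d), hadx, sq, mul_assoc]
      _ = x := by rw [haxad, hadx]
  · refine mul_pow_succ_of_le ?_ (by omega : j ≤ m + (n + j))
    calc x * a ^ (j + 1) = x * (a * d) * a ^ (j + 1) := by
          rw [mul_assoc x, mul_assoc a, ← hj, ← pow_succ']
      _ = a ^ j := by rw [hxad, hj]
  · calc star (a ^ (m + (n + j))) * a ^ (m + 1) * x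
        = star (a ^ (n + j)) * star (star (a ^ m) * a ^ (m + 1) * x) := by
          rw [hsym, pow_add, star_mul]; simp only [mul_assoc]
      _ = star (star (a ^ m) * a ^ m * (a * x * a ^ (n + j))) := by
          rw [← star_mul]; simp only [pow_succ, mul_assoc]
      _ = star (a ^ (m + (n + j))) * a ^ m := by
          rw [mul_pow_of_le hn.symm (Nat.le_add_right n j)]
          simp only [star_mul, star_star, pow_add, mul_assoc]

end Ring

theorem mwgi_iff_range_cond_general {R : Type*} [Ring R] [StarRing R]
    (m : ℕ) (a : R) :
    ((∃ z : R, IsMWGI m a z) ↔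
      ∃ d : R, IsDrazin a d ∧ ∃ x : R, ∃ n : ℕ,
        (∃ u : R, x = d * u) ∧ (∃ v : R, d = x * v) ∧
        star (star (a ^ m) * a ^ (m + 1) * x) = star (a ^ m) * a ^ (m + 1) * x ∧
        a ^ n = a * x * a ^ n) ∧
      ∀ d x : R, ∀ n : ℕ, IsDrazin a d →
        (∃ u : R, x = d * u) → (∃ v : R, d = x * v) →
        star (star (a ^ m) * a ^ (m + 1) * x) = star (a ^ m) * a ^ (m + 1) * x →
        a ^ n = a * x * a ^ n →
        IsMWGI m a x := by
  refine ⟨⟨?_, ?_⟩, fun d x n hd hx _ hsym hn => isMWGI_of_isDrazin hd hx hsym hn⟩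
  · rintro ⟨z, hz, k, hza, hk⟩
    exact ⟨_, isDrazin_pow_mul_pow hz hza, z, k, ⟨_, eq_pow_mul_pow_mul_pow_mul_pow hz hza⟩,
      ⟨z ^ (k + 1) * a ^ (k + 1), by rw [← mul_assoc, ← pow_succ']⟩,
      (isSelfAdjoint_star_pow_mul_pow_succ_mul hz hk).star_eq,
      (mul_mul_pow_of_mul_sq hz hza).symm⟩
  · rintro ⟨d, hd, x, n, hx, -, hsym, hn⟩
    exact ⟨x, isMWGI_of_isDrazin hd hx hsym hn⟩

theorem mwgi_iff_range_cond {R : Type*} [Ring R] [StarRing R]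
    (hproper : ∀ x : R, star x * x = 0 → x = 0)
    (m : ℕ) (hm : 0 < m) (a : R) :
    ((∃ z : R, IsMWGI m a z) ↔
      ∃ d : R, IsDrazin a d ∧ ∃ x : R, ∃ n : ℕ,
        (∃ u : R, x = d * u) ∧ (∃ v : R, d = x * v) ∧
        star (star (a ^ m) * a ^ (m + 1) * x) = star (a ^ m) * a ^ (m + 1) * x ∧
        a ^ n = a * x * a ^ n) ∧
      ∀ d x : R, ∀ n : ℕ, IsDrazin a d →
        (∃ u : R, x = d * u) → (∃ v : R, d = x * v) →
        star (star (a ^ m) * a ^ (m + 1) * x) = star (a ^ m) * a ^ (m + 1) * x →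
        a ^ n = a * x * a ^ n →
        IsMWGI m a x :=
  mwgi_iff_range_cond_general m a
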